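/- arXiv:2205.15487 — 2 statements merged into one kernel-verified Lean document; each statement's English description precedes it below -/
import Mathlib

section
/- A connected quiver Q is nicely-graded if and only if there exists a function u : Q_0 → Z such that u(j) = u(i) + 1 whenever there is an arrow α : i → j in Q. -/
/-! ### Walks in a quiver and the grade function -/

/-- A walk in a quiver from `i` to `j`: a finite sequence of arrows, each traversed
either forwards (`fwd`) or backwards (`bwd`).  This encodes the alternating sequences
of paths `(p_0, …, p_r)` of the paper: the forward steps make up the paths with even
index and the backward steps the paths with odd index. -/
inductive QWalk (V : Type) [Quiver.{0} V] : V → V → Type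
  | nil (i : V) : QWalk V i i
  | fwd {i j k : V} (α : i ⟶ j) (w : QWalk V j k) : QWalk V i k
  | bwd {i j k : V} (α : j ⟶ i) (w : QWalk V j k) : QWalk V i k

namespace QWalk

variable {V : Type} [Quiver.{0} V]

/-- The grade `u_{i,w}(j)` of a walk: the number of forwardly traversed arrows minus
the number of backwardly traversed arrows, i.e. `Σ_{h} (-1)^h l(p_h)`. -/
def grade : ∀ {i j : V}, QWalk V i j → ℤ
  | _, _, .nil _ => 0
  | _, _, .fwd _ w => w.grade + 1
  | _, _, .bwd _ w => w.grade - 1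

/-- The vertex `v` lies on the walk `w`. -/
def Mem : ∀ {i j : V}, QWalk V i j → V → Prop
  | _, _, .nil i, v => v = i
  | _, _, @QWalk.fwd _ _ i _ _ _ w, v => v = i ∨ w.Mem v
  | _, _, @QWalk.bwd _ _ i _ _ _ w, v => v = i ∨ w.Mem v

/-- Concatenation of walks. -/
def append : ∀ {i j l : V}, QWalk V i j → QWalk V j l → QWalk V i l
  | _, _, _, .nil _, w' => w'
  | _, _, _, .fwd α w, w' => .fwd α (w.append w')
  | _, _, _, .bwd α w, w' => .bwd α (w.append w')

/-- All vertices of the walk lie in the set `S`, i.e. the walk is a walk of the full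
subquiver on `S`. -/
def InSet {i j : V} (S : Set V) (w : QWalk V i j) : Prop := ∀ v : V, w.Mem v → v ∈ S

/-- `v` is a sink of the walk `w`: the walk passes through `v`, arriving along an arrow
pointing towards `v` and leaving along an arrow pointing towards `v`
(this is a vertex `t(p_{2h}) = t(p_{2h+1})` of a walk `(p_0, …, p_r)` in the paper). -/
def IsSink {i j : V} (w : QWalk V i j) (v : V) : Prop :=
  ∃ (a b : V) (α : a ⟶ v) (β : b ⟶ v) (w₁ : QWalk V i a) (w₂ : QWalk V b j),
    w = w₁.append (.fwd α (.bwd β w₂))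

/-- `v` is a source of the walk `w`: the walk passes through `v`, arriving along an arrow
pointing away from `v` and leaving along an arrow pointing away from `v`
(this is a vertex `s(p_{2h+1}) = s(p_{2h+2})` of a walk in the paper). -/
def IsSource {i j : V} (w : QWalk V i j) (v : V) : Prop :=
  ∃ (a b : V) (α : v ⟶ a) (β : v ⟶ b) (w₁ : QWalk V i a) (w₂ : QWalk V b j),
    w = w₁.append (.bwd α (.fwd β w₂))

end QWalk

/-- A quiver is *nicely-graded* if every cyclic walk has grade `0`,
i.e. `u_{i,w}(i) = 0` for every vertex `i` and every cyclic walk `w` from `i` to `i`. -/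
def NicelyGraded (V : Type) [Quiver.{0} V] : Prop :=
  ∀ (i : V) (w : QWalk V i i), w.grade = 0

/-- A quiver is connected if any two vertices are joined by a walk. -/
def WalkConnected (V : Type) [Quiver.{0} V] : Prop :=
  ∀ a b : V, Nonempty (QWalk V a b)

/-!
A grading `u` forces every walk from `a` to `b` to have grade `u b - u a`, so cyclic walks have
grade `0`. Conversely, in a nicely-graded quiver a walk followed by the reverse of another one with
the same endpoints is cyclic, so the grade of a walk depends only on its endpoints; the grade of a
walk from a fixed base vertex is then a grading.
-/

namespace QWalk

variable {V : Type} [Quiver.{0} V]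

theorem grade_append : ∀ {i j l : V} (w : QWalk V i j) (w' : QWalk V j l),
    (w.append w').grade = w.grade + w'.grade
  | _, _, _, .nil _, _ => by simp [append, grade]
  | _, _, _, .fwd _ w, w' => by simp only [append, grade, grade_append w w']; ring
  | _, _, _, .bwd _ w, w' => by simp only [append, grade, grade_append w w']; ring

def reverse : ∀ {i j : V}, QWalk V i j → QWalk V j i
  | _, _, .nil i => .nil i
  | _, _, .fwd α w => w.reverse.append (.bwd α (.nil _))
  | _, _, .bwd α w => w.reverse.append (.fwd α (.nil _))

theorem grade_reverse : ∀ {i j : V} (w : QWalk V i j), w.reverse.grade = -w.grade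
  | _, _, .nil _ => rfl
  | _, _, .fwd _ w => by simp only [reverse, grade_append, grade, grade_reverse w]; ring
  | _, _, .bwd _ w => by simp only [reverse, grade_append, grade, grade_reverse w]; ring

theorem grade_eq_of_nicelyGraded (h : NicelyGraded V) {i j : V} (w w' : QWalk V i j) :
    w.grade = w'.grade := by
  have hcycle := h i (w.append w'.reverse)
  rw [grade_append, grade_reverse] at hcycle
  omega

end QWalk

def IsGrading {V : Type} [Quiver.{0} V] (u : V → ℤ) : Prop :=
  ∀ i j : V, (i ⟶ j) → u j = u i + 1

section

variable {V : Type} [Quiver.{0} V]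

theorem IsGrading.grade_eq_sub {u : V → ℤ} (hu : IsGrading u) {a b : V} (w : QWalk V a b) :
    w.grade = u b - u a := by
  induction w with
  | nil => simp [QWalk.grade]
  | fwd α w ih => rw [QWalk.grade, ih, hu _ _ α]; ring
  | bwd α w ih => rw [QWalk.grade, ih, hu _ _ α]; ring

theorem IsGrading.nicelyGraded {u : V → ℤ} (hu : IsGrading u) : NicelyGraded V :=
  fun _ w => by rw [hu.grade_eq_sub w, sub_self]

theorem NicelyGraded.exists_grading (h : NicelyGraded V) (hconn : WalkConnected V) :
    ∃ u : V → ℤ, IsGrading u := by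
  rcases isEmpty_or_nonempty V with _ | ⟨⟨v₀⟩⟩
  · exact ⟨fun _ => 0, fun i => isEmptyElim i⟩
  let walkFromBase (j : V) : QWalk V v₀ j := Classical.choice (hconn v₀ j)
  refine ⟨fun j => (walkFromBase j).grade, fun i j α => ?_⟩
  have hstep := QWalk.grade_eq_of_nicelyGraded h (walkFromBase j)
    ((walkFromBase i).append (.fwd α (.nil j)))
  simp only [hstep, QWalk.grade_append, QWalk.grade, zero_add]

end

/-- Proposition `nicegrd`.
A connected quiver `Q` is nicely-graded if and only if there exists a function
`u : Q₀ → ℤ` such that `u j = u i + 1` whenever there is an arrow `α : i → j` in `Q`. -/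
theorem nicelyGraded_iff_exists_grading {V : Type} [Quiver.{0} V]
    (hconn : WalkConnected V) :
    NicelyGraded V ↔ ∃ u : V → ℤ, ∀ i j : V, (i ⟶ j) → u j = u i + 1 :=
  ⟨fun h => h.exists_grading hconn, fun ⟨_, hu⟩ => IsGrading.nicelyGraded hu⟩
end

section
/- Let Q̄ be a stable n-translation quiver. (1) If p_0 = q_0 p'_0 and p_1 = q_1 p'_1 are paths with t(p_0) = t(p_1), such that q_0 and q_1 are bound paths with 0 < l(q_0), l(q_1) ≤ n+1, then there are bound paths p''_0 and p''_1 with s(p''_0) = s(p''_1), t(p''_0) = t(p'_0) and t(p''_1) = t(p'_1), such that l(p_0) − l(p_1) = l(p'_0) − l(p''_0) + l(p''_1) − l(p'_1). (2) If p_1 = p'_1 q_1 and p_2 = p'_2 q_2 are paths with s(p_1) = s(p_2), such that q_1 and q_2 are bound paths with 0 < l(q_1), l(q_2) ≤ n+1, then there are bound paths p''_1 and p''_2 with t(p''_1) = t(p''_2), s(p''_1) = s(p'_1) and s(p''_2) = s(p'_2), such that l(p_1) − l(p_2) = l(p'_1) − l(p''_1) + l(p''_2) − l(p'_2). -/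
/-! ### Bound quivers, bound paths, properly-graded quivers -/

noncomputable section

open Quiver

/-- A vertex `v` lies on the path `p`. -/
def Quiver.Path.MemV {V : Type} [Quiver.{1} V] {i : V} :
    ∀ {j : V}, Quiver.Path i j → V → Prop
  | _, .nil, v => v = i
  | j, .cons p _, v => v = j ∨ p.MemV v

/-- A *bound quiver* over the field `k`: a quiver together with, for each pair of
vertices, a set of relations, each relation being a formal `k`-linear combination
(a finitely supported function) of paths with that source and target. -/
structure BoundQuiver (k : Type) [Field k] (V : Type) [Quiver.{1} V] where
  rel : ∀ i j : V, Set (Quiver.Path i j →₀ k)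

namespace BoundQuiver

variable {k : Type} [Field k] {V : Type} [Quiver.{1} V]

/-- The homogeneous component between `i` and `j` of the two-sided ideal `(ρ)` of the
path algebra `kQ` generated by the relations: the span of all elements obtained from a
relation by composing with a path on either side. -/
def idl (B : BoundQuiver k V) (i j : V) : Submodule k (Quiver.Path i j →₀ k) :=
  Submodule.span k
    { x | ∃ (a b : V) (pre : Quiver.Path i a) (post : Quiver.Path b j)
        (r : Quiver.Path a b →₀ k), r ∈ B.rel a b ∧
          x = Finsupp.mapDomain (fun p => (pre.comp p).comp post) r }

/-- A path is a *bound path* if its image in the quotient algebra `kQ/(ρ)` is nonzero,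
i.e. it does not lie in the ideal generated by the relations. -/
def Bound (B : BoundQuiver k V) {i j : V} (p : Quiver.Path i j) : Prop :=
  Finsupp.single p (1 : k) ∉ B.idl i j

/-- A *maximal bound path*: a bound path which is not a proper subpath of another
bound path. -/
def MaxBound (B : BoundQuiver k V) {i j : V} (p : Quiver.Path i j) : Prop :=
  B.Bound p ∧ ∀ {i' j' : V} (x : Quiver.Path i' i) (y : Quiver.Path j j'),
    B.Bound ((x.comp p).comp y) → x.length = 0 ∧ y.length = 0

/-- A bound quiver is *`n`-properly-graded* if all maximal bound paths have the same
length `n`. -/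
def ProperlyGraded (B : BoundQuiver k V) (n : ℕ) : Prop :=
  ∀ {i j : V} (p : Quiver.Path i j), B.MaxBound p → p.length = n

end BoundQuiver

/-- The quiver has no oriented cycles. -/
def QuiverAcyclic (V : Type) [Quiver.{1} V] : Prop :=
  ∀ (i : V) (p : Quiver.Path i i), p.length = 0

end
/-! ### Stable n-translation quivers, complete τ-slices and τ-mutations -/

noncomputable section

/-- `B` is a *stable `n`-translation quiver* with `n`-translation `τ`: the bound quiver
of a graded self-injective algebra of Loewy length `n+2`.  Every maximal bound path
has length `n+1` and runs from `τ i` to `i`, and (self-injectivity) every bound path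
can be completed on either side to a maximal bound path. -/
structure IsStableTranslationQuiver {k : Type} [Field k] {V : Type} [Quiver.{1} V]
    (B : BoundQuiver k V) (n : ℕ) (τ : V ≃ V) : Prop where
  max_len : ∀ {i j : V} (p : Quiver.Path i j), B.MaxBound p → p.length = n + 1
  max_src : ∀ {i j : V} (p : Quiver.Path i j), B.MaxBound p → i = τ j
  extend_left : ∀ {i j : V} (p : Quiver.Path i j), B.Bound p →
    ∃ q : Quiver.Path (τ j) i, B.MaxBound (q.comp p)
  extend_right : ∀ {i j : V} (p : Quiver.Path i j), B.Bound p →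
    ∃ q : Quiver.Path j (τ.symm i), B.MaxBound (p.comp q)

/-- `τ` has finitely many orbits on the vertices. -/
def FinitelyManyOrbits {V : Type} (τ : V ≃ V) : Prop :=
  ∃ F : Finset V, ∀ v : V, ∃ m : ℤ, (τ ^ m) v ∈ F

/-- `S` is a *complete `τ`-slice*: a full convex subquiver whose vertex set meets each
`τ`-orbit exactly once. -/
structure IsCompleteTauSlice {V : Type} [Quiver.{1} V] (τ : V ≃ V) (S : Set V) : Prop where
  orbit_unique : ∀ v : V, ∃! m : ℤ, (τ ^ m) v ∈ S
  convex : ∀ {i j : V} (p : Quiver.Path i j), i ∈ S → j ∈ S → ∀ v : V, p.MemV v → v ∈ S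

/-- `i` is a source of the full subquiver on `S`. -/
def IsSliceSource {V : Type} [Quiver.{1} V] (S : Set V) (i : V) : Prop :=
  i ∈ S ∧ ∀ j ∈ S, IsEmpty (j ⟶ i)

/-- `i` is a sink of the full subquiver on `S`. -/
def IsSliceSink {V : Type} [Quiver.{1} V] (S : Set V) (i : V) : Prop :=
  i ∈ S ∧ ∀ j ∈ S, IsEmpty (i ⟶ j)

/-- The τ-mutation `s_i^+ S` of a complete τ-slice `S` at a source `i`:
remove `i` and add `τ⁻¹ i`. -/
def mutPlus {V : Type} (τ : V ≃ V) (S : Set V) (i : V) : Set V :=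
  insert (τ.symm i) (S \ {i})

/-- The τ-mutation `s_j^- S` of a complete τ-slice `S` at a sink `j`:
remove `j` and add `τ j`. -/
def mutMinus {V : Type} (τ : V ≃ V) (S : Set V) (j : V) : Set V :=
  insert (τ j) (S \ {j})

/-- Iterated source mutations `s^+_{i_r} ⋯ s^+_{i_1} S` along a list `[i_1, …, i_r]`. -/
def mutPlusList {V : Type} (τ : V ≃ V) : Set V → List V → Set V
  | S, [] => S
  | S, i :: l => mutPlusList τ (mutPlus τ S i) l

/-- Iterated sink mutations `s^-_{i_r} ⋯ s^-_{i_1} S`. -/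
def mutMinusList {V : Type} (τ : V ≃ V) : Set V → List V → Set V
  | S, [] => S
  | S, i :: l => mutMinusList τ (mutMinus τ S i) l

/-- `[i_1, …, i_r]` is an *admissible source sequence* for `S`. -/
def AdmissibleSourceSeq {V : Type} [Quiver.{1} V] (τ : V ≃ V) : Set V → List V → Prop
  | _, [] => True
  | S, i :: l => IsSliceSource S i ∧ AdmissibleSourceSeq τ (mutPlus τ S i) l

/-- `[i_1, …, i_r]` is an *admissible sink sequence* for `S`. -/
def AdmissibleSinkSeq {V : Type} [Quiver.{1} V] (τ : V ≃ V) : Set V → List V → Prop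
  | _, [] => True
  | S, i :: l => IsSliceSink S i ∧ AdmissibleSinkSeq τ (mutMinus τ S i) l

/-- One mixed mutation step: `(true, i)` is `s_i^+`, `(false, i)` is `s_i^-`. -/
def mutStep {V : Type} (τ : V ≃ V) (S : Set V) : Bool × V → Set V
  | (true, i) => mutPlus τ S i
  | (false, i) => mutMinus τ S i

/-- Iterated mixed mutations. -/
def mutMixedList {V : Type} (τ : V ≃ V) : Set V → List (Bool × V) → Set V
  | S, [] => S
  | S, s :: l => mutMixedList τ (mutStep τ S s) l

/-- Admissibility of a mixed sequence of mutations: each `s_i^+` is taken at a source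
and each `s_i^-` at a sink of the current slice. -/
def AdmissibleMixedSeq {V : Type} [Quiver.{1} V] (τ : V ≃ V) : Set V → List (Bool × V) → Prop
  | _, [] => True
  | S, (true, i) :: l => IsSliceSource S i ∧ AdmissibleMixedSeq τ (mutPlus τ S i) l
  | S, (false, i) :: l => IsSliceSink S i ∧ AdmissibleMixedSeq τ (mutMinus τ S i) l

end

/-!
By self-injectivity each bound path `q : c ⟶ j` extends on the left to a maximal bound path
`τ j ⟶ j`, of length `n + 1`; the extension `p'' : τ j ⟶ c` is bound and has length
`n + 1 - l(q)`. Choosing these for `q₀` and `q₁` gives paths with common source `τ j`, and the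
length identity is then arithmetic. Part (2) is dual, extending to the right up to `τ⁻¹ a`.
-/

namespace BoundQuiver

variable {k : Type} [Field k] {V : Type} [Quiver.{1} V] {B : BoundQuiver k V}

theorem mapDomain_comp_comp_mem_idl {i j i' j' : V} (x : Quiver.Path i' i)
    (y : Quiver.Path j j') {r : Quiver.Path i j →₀ k} (hr : r ∈ B.idl i j) :
    Finsupp.mapDomain (fun p => (x.comp p).comp y) r ∈ B.idl i' j' := by
  induction hr using Submodule.span_induction with
  | mem r hr =>
    obtain ⟨a, b, pre, post, r, hr, rfl⟩ := hr
    refine Submodule.subset_span ⟨a, b, x.comp pre, post.comp y, r, hr, ?_⟩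
    rw [← Finsupp.mapDomain_comp]
    congr 1
    funext p
    simp only [Function.comp, Quiver.Path.comp_assoc]
  | zero => simp
  | add r s _ _ hr hs => rw [Finsupp.mapDomain_add]; exact add_mem hr hs
  | smul c r _ hr => rw [Finsupp.mapDomain_smul]; exact Submodule.smul_mem _ c hr

theorem Bound.of_comp_comp {i j i' j' : V} {x : Quiver.Path i' i} {p : Quiver.Path i j}
    {y : Quiver.Path j j'} (h : B.Bound ((x.comp p).comp y)) : B.Bound p := fun hp =>
  h (by simpa only [Finsupp.mapDomain_single] using mapDomain_comp_comp_mem_idl x y hp)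

theorem Bound.of_comp_right {i j j' : V} {p : Quiver.Path i j} {q : Quiver.Path j j'}
    (h : B.Bound (p.comp q)) : B.Bound p :=
  Bound.of_comp_comp (x := .nil) (by rwa [Quiver.Path.nil_comp])

theorem Bound.of_comp_left {i i' j : V} {q : Quiver.Path i' i} {p : Quiver.Path i j}
    (h : B.Bound (q.comp p)) : B.Bound p :=
  Bound.of_comp_comp (y := .nil) h

end BoundQuiver

namespace IsStableTranslationQuiver

variable {k : Type} [Field k] {V : Type} [Quiver.{1} V] {B : BoundQuiver k V} {n : ℕ}
  {τ : V ≃ V}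

theorem exists_bound_complement_left (hT : IsStableTranslationQuiver B n τ) {i j : V}
    {q : Quiver.Path i j} (hq : B.Bound q) :
    ∃ r : Quiver.Path (τ j) i, B.Bound r ∧ r.length + q.length = n + 1 := by
  obtain ⟨r, hr⟩ := hT.extend_left q hq
  exact ⟨r, hr.1.of_comp_right, by rw [← Quiver.Path.length_comp, hT.max_len _ hr]⟩

theorem exists_bound_complement_right (hT : IsStableTranslationQuiver B n τ) {i j : V}
    {q : Quiver.Path i j} (hq : B.Bound q) :
    ∃ r : Quiver.Path j (τ.symm i), B.Bound r ∧ q.length + r.length = n + 1 := by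
  obtain ⟨r, hr⟩ := hT.extend_right q hq
  exact ⟨r, hr.1.of_comp_left, by rw [← Quiver.Path.length_comp, hT.max_len _ hr]⟩

end IsStableTranslationQuiver

/-- Lemma `two_paths`.
Let `Q̄` be a stable `n`-translation quiver.
(1) If `p₀ = q₀ p₀'` and `p₁ = q₁ p₁'` are paths with `t(p₀) = t(p₁)`, such that `q₀`
and `q₁` are bound paths with `0 < l(q₀), l(q₁) ≤ n+1`, then there are bound paths
`p₀''` and `p₁''` with `s(p₀'') = s(p₁'')`, `t(p₀'') = t(p₀')` and `t(p₁'') = t(p₁')`,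
such that `l(p₀) − l(p₁) = l(p₀') − l(p₀'') + l(p₁'') − l(p₁')`.
(2) The dual statement for paths with a common source. -/
theorem two_paths {k : Type} [Field k] {V : Type} [Quiver.{1} V]
    (B : BoundQuiver k V) (n : ℕ) (τ : V ≃ V)
    (hT : IsStableTranslationQuiver B n τ) :
    (∀ {a b c d j : V} (p₀' : Quiver.Path a c) (q₀ : Quiver.Path c j)
        (p₁' : Quiver.Path b d) (q₁ : Quiver.Path d j),
      B.Bound q₀ → B.Bound q₁ →
      0 < q₀.length → q₀.length ≤ n + 1 → 0 < q₁.length → q₁.length ≤ n + 1 →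
        ∃ (e : V) (p₀'' : Quiver.Path e c) (p₁'' : Quiver.Path e d),
          B.Bound p₀'' ∧ B.Bound p₁'' ∧
            ((p₀'.comp q₀).length : ℤ) - ((p₁'.comp q₁).length : ℤ) =
              (p₀'.length : ℤ) - (p₀''.length : ℤ)
                + (p₁''.length : ℤ) - (p₁'.length : ℤ)) ∧
    (∀ {a c d j₁ j₂ : V} (q₁ : Quiver.Path a c) (p₁' : Quiver.Path c j₁)
        (q₂ : Quiver.Path a d) (p₂' : Quiver.Path d j₂),
      B.Bound q₁ → B.Bound q₂ →
      0 < q₁.length → q₁.length ≤ n + 1 → 0 < q₂.length → q₂.length ≤ n + 1 →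
        ∃ (e : V) (p₁'' : Quiver.Path c e) (p₂'' : Quiver.Path d e),
          B.Bound p₁'' ∧ B.Bound p₂'' ∧
            ((q₁.comp p₁').length : ℤ) - ((q₂.comp p₂').length : ℤ) =
              (p₁'.length : ℤ) - (p₁''.length : ℤ)
                + (p₂''.length : ℤ) - (p₂'.length : ℤ)) := by
  constructor
  · intro a b c d j p₀' q₀ p₁' q₁ hq₀ hq₁ _ _ _ _
    obtain ⟨r₀, hr₀, hlen₀⟩ := hT.exists_bound_complement_left hq₀
    obtain ⟨r₁, hr₁, hlen₁⟩ := hT.exists_bound_complement_left hq₁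
    refine ⟨τ j, r₀, r₁, hr₀, hr₁, ?_⟩
    simp only [Quiver.Path.length_comp]
    omega
  · intro a c d j₁ j₂ q₁ p₁' q₂ p₂' hq₁ hq₂ _ _ _ _
    obtain ⟨r₁, hr₁, hlen₁⟩ := hT.exists_bound_complement_right hq₁
    obtain ⟨r₂, hr₂, hlen₂⟩ := hT.exists_bound_complement_right hq₂
    refine ⟨τ.symm a, r₁, r₂, hr₁, hr₂, ?_⟩
    simp only [Quiver.Path.length_comp]
    omega
end
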